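/- Let π and μ be policies with μ(a|s) > 0 for all s ∈ S, a ∈ A, let 0 ≤ c̄ ≤ ρ̄ be reals, and set c(s,a) = min(c̄, π(a|s)/μ(a|s)) and ρ(s,a) = min(ρ̄, π(a|s)/μ(a|s)). Assume ∑_{a∈A} μ(a|s)·ρ(s,a) ≥ β for all s, where β ∈ (0,1]. Then the V-trace operator R built from these weights is a contraction on functions S → ℝ^K (with sup norm) with contraction constant at most 1 − (1 − γ)β < 1, and its unique fixed point is V^{π̃}, the value function of the policy π̃(a|s) = min(ρ̄·μ(a|s), π(a|s)) / ∑_{b∈A} min(ρ̄·μ(b|s), π(b|s)). -/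

import Mathlib

open Finset

/-- `exw μ P c h t s` is the trajectory expectation
`E_μ[(c(s_0,a_0)⋯c(s_{t-1},a_{t-1})) * h(s_t, a_t, s_{t+1}) | s_0 = s]` in a finite MDP
with behavioral policy `μ` and transition kernel `P`. -/
noncomputable def exw {S A : Type*} [Fintype S] [Fintype A]
    (μ : S → A → ℝ) (P : S → A → S → ℝ) (c : S → A → ℝ)
    (h : S → A → S → ℝ) : ℕ → S → ℝ
  | 0, s => ∑ a, μ s a * ∑ s', P s a s' * h s a s'
  | (t + 1), s => ∑ a, μ s a * c s a * ∑ s', P s a s' * exw μ P c h t s'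

/-- The V-trace operator `R` (componentwise, for `ℝ^K`-valued value functions):
`R V s k = V s k + ∑_{t=0}^∞ γ^t E_μ[(c_0⋯c_{t-1}) ρ_t (r_t + γ V(s_{t+1}) - V(s_t)) | s_0 = s]`. -/
noncomputable def vtraceOp {S A : Type*} [Fintype S] [Fintype A] {K : ℕ}
    (γ : ℝ) (μ : S → A → ℝ) (P : S → A → S → ℝ) (c ρ : S → A → ℝ)
    (r : S → A → Fin K → ℝ) (V : S → Fin K → ℝ) : S → Fin K → ℝ :=
  fun s k => V s k + ∑' t : ℕ,
    γ ^ t * exw μ P c (fun s1 a s2 => ρ s1 a * (r s1 a k + γ * V s2 k - V s1 k)) t s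

/-- The value function of a policy `π`:
`V^π(s) = ∑_{t=0}^∞ γ^t E_π[r(s_t, a_t) | s_0 = s]`, componentwise. -/
noncomputable def valueFn {S A : Type*} [Fintype S] [Fintype A] {K : ℕ}
    (γ : ℝ) (π : S → A → ℝ) (P : S → A → S → ℝ)
    (r : S → A → Fin K → ℝ) : S → Fin K → ℝ :=
  fun s k => ∑' t : ℕ, γ ^ t * exw π P (fun _ _ => 1) (fun s1 a _ => r s1 a k) t s

/-- The sup norm `‖V‖_∞ = max_{s} max_{k} |V_k(s)|` on functions `S → ℝ^K`. -/
noncomputable def supNorm {S : Type*} [Fintype S] [Nonempty S] {K : ℕ} [NeZero K]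
    (V : S → Fin K → ℝ) : ℝ :=
  Finset.univ.sup' Finset.univ_nonempty fun s =>
    Finset.univ.sup' Finset.univ_nonempty fun k : Fin K => |V s k|

/-!  Auxiliary lemmas -/
section Helpers
variable {S A : Type*} [Fintype S] [Fintype A]

noncomputable def iterM (μ : S → A → ℝ) (P : S → A → S → ℝ) (c : S → A → ℝ)
    (f : S → ℝ) : ℕ → S → ℝ
  | 0 => f
  | (t + 1) => fun s => ∑ a, μ s a * c s a * ∑ s', P s a s' * iterM μ P c f t s'

variable {μ : S → A → ℝ} {P : S → A → S → ℝ} {c : S → A → ℝ}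

lemma exw_eq_iterM (h : S → A → S → ℝ) (t : ℕ) :
    exw μ P c h t = iterM μ P c (exw μ P c h 0) t := by
  induction t with
  | zero => rfl
  | succ t ih => funext s; simp only [exw, iterM, ih]

lemma exw_sub (h₁ h₂ : S → A → S → ℝ) : ∀ (t : ℕ) (s : S),
    exw μ P c h₁ t s - exw μ P c h₂ t s
      = exw μ P c (fun s1 a s2 => h₁ s1 a s2 - h₂ s1 a s2) t s := by
  intro t
  induction t with
  | zero =>
      intro s
      simp only [exw, ← Finset.sum_sub_distrib, ← mul_sub]
  | succ t ih =>
      intro s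
      simp only [exw, ← Finset.sum_sub_distrib, ← mul_sub]
      refine Finset.sum_congr rfl fun a _ => ?_
      congr 1
      refine Finset.sum_congr rfl fun s' _ => ?_
      rw [ih]

lemma exw_zero_of (h : S → A → S → ℝ) (h0 : ∀ s, exw μ P c h 0 s = 0) :
    ∀ (t : ℕ) (s : S), exw μ P c h t s = 0 := by
  intro t
  induction t with
  | zero => exact h0
  | succ t ih => intro s; simp [exw, ih]

lemma iterM_nonneg (hμ : ∀ s a, 0 ≤ μ s a) (hc : ∀ s a, 0 ≤ c s a)
    (hP : ∀ s a s', 0 ≤ P s a s') {f : S → ℝ} (hf : ∀ s, 0 ≤ f s) :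
    ∀ (t : ℕ) (s : S), 0 ≤ iterM μ P c f t s := by
  intro t
  induction t with
  | zero => exact hf
  | succ t ih =>
      intro s
      refine Finset.sum_nonneg fun a _ => mul_nonneg (mul_nonneg (hμ s a) (hc s a)) ?_
      exact Finset.sum_nonneg fun s' _ => mul_nonneg (hP s a s') (ih s')

lemma iterM_abs_le (hμ : ∀ s a, 0 ≤ μ s a) (hc : ∀ s a, 0 ≤ c s a)
    (hP : ∀ s a s', 0 ≤ P s a s') {f g : S → ℝ} (hfg : ∀ s, |f s| ≤ g s) :
    ∀ (t : ℕ) (s : S), |iterM μ P c f t s| ≤ iterM μ P c g t s := by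
  intro t
  induction t with
  | zero => exact hfg
  | succ t ih =>
      intro s
      calc |iterM μ P c f (t+1) s| ≤ ∑ a, |μ s a * c s a * ∑ s', P s a s' * iterM μ P c f t s'| :=
            Finset.abs_sum_le_sum_abs _ _
        _ ≤ ∑ a, μ s a * c s a * ∑ s', P s a s' * iterM μ P c g t s' := by
            refine Finset.sum_le_sum fun a _ => ?_
            rw [abs_mul, abs_of_nonneg (mul_nonneg (hμ s a) (hc s a))]
            refine mul_le_mul_of_nonneg_left ?_ (mul_nonneg (hμ s a) (hc s a))
            calc |∑ s', P s a s' * iterM μ P c f t s'|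
                ≤ ∑ s', |P s a s' * iterM μ P c f t s'| := Finset.abs_sum_le_sum_abs _ _
              _ ≤ ∑ s', P s a s' * iterM μ P c g t s' := by
                  refine Finset.sum_le_sum fun s' _ => ?_
                  rw [abs_mul, abs_of_nonneg (hP s a s')]
                  exact mul_le_mul_of_nonneg_left (ih s') (hP s a s')
        _ = iterM μ P c g (t+1) s := rfl

lemma iterM_bound (hμ : ∀ s a, 0 ≤ μ s a) (hc : ∀ s a, 0 ≤ c s a)
    (hP : ∀ s a s', 0 ≤ P s a s') (hμc : ∀ s, ∑ a, μ s a * c s a ≤ 1)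
    (hP1 : ∀ s a, ∑ s', P s a s' = 1)
    {f : S → ℝ} {C : ℝ} (hC : 0 ≤ C) (hf : ∀ s, |f s| ≤ C) :
    ∀ (t : ℕ) (s : S), |iterM μ P c f t s| ≤ C := by
  intro t
  induction t with
  | zero => exact hf
  | succ t ih =>
      intro s
      calc |iterM μ P c f (t+1) s| ≤ ∑ a, |μ s a * c s a * ∑ s', P s a s' * iterM μ P c f t s'| :=
            Finset.abs_sum_le_sum_abs _ _
        _ ≤ ∑ a, μ s a * c s a * C := by
            refine Finset.sum_le_sum fun a _ => ?_
            rw [abs_mul, abs_of_nonneg (mul_nonneg (hμ s a) (hc s a))]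
            refine mul_le_mul_of_nonneg_left ?_ (mul_nonneg (hμ s a) (hc s a))
            calc |∑ s', P s a s' * iterM μ P c f t s'|
                ≤ ∑ s', |P s a s' * iterM μ P c f t s'| := Finset.abs_sum_le_sum_abs _ _
              _ ≤ ∑ s', P s a s' * C := by
                  refine Finset.sum_le_sum fun s' _ => ?_
                  rw [abs_mul, abs_of_nonneg (hP s a s')]
                  exact mul_le_mul_of_nonneg_left (ih s') (hP s a s')
              _ = C := by rw [← Finset.sum_mul, hP1, one_mul]
        _ = (∑ a, μ s a * c s a) * C := by rw [Finset.sum_mul]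
        _ ≤ 1 * C := mul_le_mul_of_nonneg_right (hμc s) hC
        _ = C := one_mul C

lemma summable_iterM {γ : ℝ} (hγ0 : 0 ≤ γ) (hγ1 : γ < 1)
    (hμ : ∀ s a, 0 ≤ μ s a) (hc : ∀ s a, 0 ≤ c s a)
    (hP : ∀ s a s', 0 ≤ P s a s') (hμc : ∀ s, ∑ a, μ s a * c s a ≤ 1)
    (hP1 : ∀ s a, ∑ s', P s a s' = 1)
    {f : S → ℝ} {C : ℝ} (hC : 0 ≤ C) (hf : ∀ s, |f s| ≤ C) (s : S) :
    Summable (fun t : ℕ => γ ^ t * iterM μ P c f t s) := by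
  apply Summable.of_norm
  refine Summable.of_nonneg_of_le (fun t => norm_nonneg _) (fun t => ?_)
    ((summable_geometric_of_lt_one hγ0 hγ1).mul_right C)
  rw [Real.norm_eq_abs, abs_mul, abs_pow, abs_of_nonneg hγ0]
  exact mul_le_mul_of_nonneg_left (iterM_bound hμ hc hP hμc hP1 hC hf t s) (pow_nonneg hγ0 t)

lemma exists_bound₁ (f : S → ℝ) : ∃ C : ℝ, 0 ≤ C ∧ ∀ s, |f s| ≤ C :=
  ⟨∑ s, |f s|, Finset.sum_nonneg fun _ _ => abs_nonneg _,
    fun s => Finset.single_le_sum (fun i _ => abs_nonneg (f i)) (Finset.mem_univ s)⟩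

lemma iterM_sub (f g : S → ℝ) : ∀ (t : ℕ) (s : S),
    iterM μ P c (fun s => f s - g s) t s = iterM μ P c f t s - iterM μ P c g t s := by
  intro t
  induction t with
  | zero => intro s; rfl
  | succ t ih =>
      intro s
      simp only [iterM, ← Finset.sum_sub_distrib, ← mul_sub]
      refine Finset.sum_congr rfl fun a _ => ?_
      congr 1
      refine Finset.sum_congr rfl fun s' _ => ?_
      rw [ih, mul_sub]

lemma iterM_smul (b : ℝ) (f : S → ℝ) : ∀ (t : ℕ) (s : S),
    iterM μ P c (fun s => b * f s) t s = b * iterM μ P c f t s := by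
  intro t
  induction t with
  | zero => intro s; rfl
  | succ t ih =>
      intro s
      simp only [iterM, Finset.mul_sum]
      refine Finset.sum_congr rfl fun a _ => Finset.sum_congr rfl fun s' _ => ?_
      rw [ih]; ring

lemma iterM_succ' (f : S → ℝ) : ∀ (t : ℕ) (s : S),
    iterM μ P c f (t + 1) s = iterM μ P c (iterM μ P c f 1) t s := by
  intro t
  induction t with
  | zero => intro s; rfl
  | succ t ih =>
      intro s
      show (∑ a, μ s a * c s a * ∑ s', P s a s' * iterM μ P c f (t+1) s')
        = (∑ a, μ s a * c s a * ∑ s', P s a s' * iterM μ P c (iterM μ P c f 1) t s')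
      simp only [ih]

lemma key_rearrange (Q ρδ : S → ℝ) (s : S)
    (hsum : ∀ (f : S → ℝ) (s : S), Summable fun t : ℕ => γ ^ t * iterM μ P c f t s) :
    ∑' t : ℕ, γ ^ t * iterM μ P c (fun s => γ * Q s - ρδ s) t s
      = -(ρδ s) + ∑' t : ℕ, γ ^ (t + 1) *
          iterM μ P c (fun s => Q s - iterM μ P c ρδ 1 s) t s := by
  have hsum' : ∀ (f : S → ℝ) (s : S),
      Summable fun t : ℕ => γ ^ (t + 1) * iterM μ P c f t s := by
    intro f s
    have := (hsum f s).mul_left γ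
    refine this.congr fun t => ?_
    rw [pow_succ]; ring
  have h1 : ∀ t, γ ^ t * iterM μ P c (fun s => γ * Q s - ρδ s) t s
      = γ ^ (t + 1) * iterM μ P c Q t s - γ ^ t * iterM μ P c ρδ t s := by
    intro t
    rw [show (fun s => γ * Q s - ρδ s) = (fun s => (fun s => γ * Q s) s - ρδ s) from rfl,
      iterM_sub, iterM_smul, pow_succ]
    ring
  calc ∑' t : ℕ, γ ^ t * iterM μ P c (fun s => γ * Q s - ρδ s) t s
      = ∑' t : ℕ, (γ ^ (t + 1) * iterM μ P c Q t s - γ ^ t * iterM μ P c ρδ t s) :=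
        tsum_congr h1
    _ = (∑' t : ℕ, γ ^ (t + 1) * iterM μ P c Q t s) -
          ∑' t : ℕ, γ ^ t * iterM μ P c ρδ t s :=
        Summable.tsum_sub (hsum' Q s) (hsum ρδ s)
    _ = (∑' t : ℕ, γ ^ (t + 1) * iterM μ P c Q t s) -
          (ρδ s + ∑' t : ℕ, γ ^ (t + 1) * iterM μ P c (iterM μ P c ρδ 1) t s) := by
        rw [Summable.tsum_eq_zero_add (hsum ρδ s)]
        simp only [pow_zero, one_mul]
        congr 2
        · exact (tsum_congr fun t => by rw [iterM_succ']

          )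
    _ = -(ρδ s) + ∑' t : ℕ, γ ^ (t + 1) *
          iterM μ P c (fun s => Q s - iterM μ P c ρδ 1 s) t s := by
        rw [show ∑' t : ℕ, γ ^ (t+1) * iterM μ P c (fun s => Q s - iterM μ P c ρδ 1 s) t s
          = (∑' t : ℕ, γ ^ (t+1) * iterM μ P c Q t s)
            - ∑' t : ℕ, γ ^ (t+1) * iterM μ P c (iterM μ P c ρδ 1) t s from ?_]
        · ring
        rw [show (fun t : ℕ => γ ^ (t+1) * iterM μ P c (fun s => Q s - iterM μ P c ρδ 1 s) t s)
          = (fun t : ℕ => γ ^ (t+1) * iterM μ P c Q t s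
            - γ ^ (t+1) * iterM μ P c (iterM μ P c ρδ 1) t s) from
          funext fun t => by rw [iterM_sub]; ring]
        exact Summable.tsum_sub (hsum' Q s) (hsum' (iterM μ P c ρδ 1) s)

lemma key_telescope (f : S → ℝ) (s : S)
    (hsum : ∀ (f : S → ℝ) (s : S), Summable fun t : ℕ => γ ^ t * iterM μ P c f t s) :
    ∑' t : ℕ, γ ^ (t + 1) * iterM μ P c (fun s => f s - iterM μ P c f 1 s) t s
      = γ * (∑' t : ℕ, γ ^ t * iterM μ P c f t s)
        - ((∑' t : ℕ, γ ^ t * iterM μ P c f t s) - f s) := by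
  have hsum' : ∀ (g : S → ℝ) (s : S),
      Summable fun t : ℕ => γ ^ (t + 1) * iterM μ P c g t s := by
    intro g s
    have := (hsum g s).mul_left γ
    refine this.congr fun t => ?_
    rw [pow_succ]; ring
  have h1 : ∀ t, γ ^ (t + 1) * iterM μ P c (fun s => f s - iterM μ P c f 1 s) t s
      = γ ^ (t + 1) * iterM μ P c f t s - γ ^ (t + 1) * iterM μ P c f (t + 1) s := by
    intro t; rw [iterM_sub, iterM_succ']; ring
  have h2 : Summable fun t : ℕ => γ ^ (t + 1) * iterM μ P c f (t + 1) s := by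
    refine (hsum' (iterM μ P c f 1) s).congr fun t => ?_
    rw [iterM_succ']
  calc ∑' t : ℕ, γ ^ (t + 1) * iterM μ P c (fun s => f s - iterM μ P c f 1 s) t s
      = ∑' t : ℕ, (γ ^ (t + 1) * iterM μ P c f t s - γ ^ (t + 1) * iterM μ P c f (t + 1) s) :=
        tsum_congr h1
    _ = (∑' t : ℕ, γ ^ (t + 1) * iterM μ P c f t s)
        - ∑' t : ℕ, γ ^ (t + 1) * iterM μ P c f (t + 1) s :=
        Summable.tsum_sub (hsum' f s) h2
    _ = γ * (∑' t : ℕ, γ ^ t * iterM μ P c f t s)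
        - ((∑' t : ℕ, γ ^ t * iterM μ P c f t s) - f s) := by
        have e1 : ∑' t : ℕ, γ ^ (t + 1) * iterM μ P c f t s
            = γ * ∑' t : ℕ, γ ^ t * iterM μ P c f t s := by
          rw [← tsum_mul_left]
          exact tsum_congr fun t => by rw [pow_succ]; ring
        have e2 : ∑' t : ℕ, γ ^ t * iterM μ P c f t s
            = f s + ∑' t : ℕ, γ ^ (t + 1) * iterM μ P c f (t + 1) s := by
          rw [Summable.tsum_eq_zero_add (hsum f s)]
          simp only [pow_zero, one_mul]
          rfl
        rw [e1]
        linarith [e2]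

end Helpers

lemma bellman {S A : Type*} [Fintype S] [Fintype A] {K : ℕ}
    {γ : ℝ} (hγ0 : 0 ≤ γ) (hγ1 : γ < 1)
    {π : S → A → ℝ} (hπ0 : ∀ s a, 0 ≤ π s a) (hπ1 : ∀ s, ∑ a, π s a = 1)
    {P : S → A → S → ℝ} (hP0 : ∀ s a s', 0 ≤ P s a s') (hP1 : ∀ s a, ∑ s', P s a s' = 1)
    (r : S → A → Fin K → ℝ) (s : S) (k : Fin K) :
    valueFn γ π P r s k
      = ∑ a, π s a * (r s a k + γ * ∑ s', P s a s' * valueFn γ π P r s' k) := by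
  have hc0 : ∀ (s : S) (a : A), (0:ℝ) ≤ (fun (_ : S) (_ : A) => (1:ℝ)) s a := fun _ _ => zero_le_one
  have hμc : ∀ s : S, ∑ a : A, π s a * (fun (_ : S) (_ : A) => (1:ℝ)) s a ≤ 1 := by
    intro s; simp [hπ1 s]
  set f0 : S → ℝ := exw π P (fun _ _ => 1) (fun s1 a _ => r s1 a k) 0 with hf0def
  have hsum : ∀ (f : S → ℝ) (s : S),
      Summable fun t : ℕ => γ ^ t * iterM π P (fun _ _ => 1) f t s := by
    intro f s
    obtain ⟨C, hC0, hC⟩ := exists_bound₁ f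
    exact summable_iterM hγ0 hγ1 hπ0 hc0 hP0 hμc hP1 hC0 hC s
  have hW : ∀ s' : S, valueFn γ π P r s' k
      = ∑' t : ℕ, γ ^ t * iterM π P (fun _ _ => 1) f0 t s' := by
    intro s'
    exact tsum_congr fun t => by rw [hf0def, ← exw_eq_iterM]
  have hterm : ∀ t, γ ^ (t + 1) * iterM π P (fun _ _ => 1) f0 (t + 1) s
      = ∑ a, ∑ s', (γ * (π s a * P s a s')) * (γ ^ t * iterM π P (fun _ _ => 1) f0 t s') := by
    intro t
    show γ ^ (t + 1) * (∑ a, π s a * (1:ℝ) * ∑ s', P s a s' * iterM π P (fun _ _ => 1) f0 t s') = _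
    simp only [Finset.mul_sum]
    refine Finset.sum_congr rfl fun a _ => Finset.sum_congr rfl fun s' _ => ?_
    rw [pow_succ]; ring
  have hswap : ∑' t : ℕ, γ ^ (t + 1) * iterM π P (fun _ _ => 1) f0 (t + 1) s
      = ∑ a, ∑ s', (γ * (π s a * P s a s')) * valueFn γ π P r s' k := by
    calc ∑' t : ℕ, γ ^ (t + 1) * iterM π P (fun _ _ => 1) f0 (t + 1) s
        = ∑' t : ℕ, ∑ a, ∑ s',
            (γ * (π s a * P s a s')) * (γ ^ t * iterM π P (fun _ _ => 1) f0 t s') :=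
          tsum_congr hterm
      _ = ∑ a, ∑' t : ℕ, ∑ s',
            (γ * (π s a * P s a s')) * (γ ^ t * iterM π P (fun _ _ => 1) f0 t s') :=
          Summable.tsum_finsetSum fun a _ => summable_sum fun s' _ => (hsum f0 s').mul_left _
      _ = ∑ a, ∑ s', ∑' t : ℕ,
            (γ * (π s a * P s a s')) * (γ ^ t * iterM π P (fun _ _ => 1) f0 t s') :=
          Finset.sum_congr rfl fun a _ => Summable.tsum_finsetSum fun s' _ => (hsum f0 s').mul_left _
      _ = ∑ a, ∑ s', (γ * (π s a * P s a s')) * valueFn γ π P r s' k := by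
          refine Finset.sum_congr rfl fun a _ => Finset.sum_congr rfl fun s' _ => ?_
          rw [tsum_mul_left, hW s']
  have hf0 : f0 s = ∑ a, π s a * r s a k := by
    show (∑ a, π s a * ∑ s', P s a s' * r s a k) = _
    refine Finset.sum_congr rfl fun a _ => ?_
    rw [← Finset.sum_mul, hP1, one_mul]
  have hsplit : valueFn γ π P r s k = f0 s
      + ∑' t : ℕ, γ ^ (t + 1) * iterM π P (fun _ _ => 1) f0 (t + 1) s := by
    rw [hW s, Summable.tsum_eq_zero_add (hsum f0 s), pow_zero, one_mul]
    rfl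
  have hrhs : (∑ a, π s a * (r s a k + γ * ∑ s', P s a s' * valueFn γ π P r s' k))
      = ∑ a, (π s a * r s a k + ∑ s', (γ * (π s a * P s a s')) * valueFn γ π P r s' k) := by
    refine Finset.sum_congr rfl fun a _ => ?_
    rw [mul_add]
    congr 1
    rw [Finset.mul_sum, Finset.mul_sum]
    exact Finset.sum_congr rfl fun s' _ => by ring
  rw [hsplit, hswap, hf0, hrhs, Finset.sum_add_distrib]


lemma vtrace_diff_bound {S A : Type*} [Fintype S] [Fintype A] {K : ℕ}
    {γ : ℝ} (hγ0 : 0 ≤ γ) (hγ1 : γ < 1)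
    {μ : S → A → ℝ} {P : S → A → S → ℝ} {c ρ : S → A → ℝ}
    (hμ0 : ∀ s a, 0 ≤ μ s a)
    (hP0 : ∀ s a s', 0 ≤ P s a s') (hP1 : ∀ s a, ∑ s', P s a s' = 1)
    (hc0 : ∀ s a, 0 ≤ c s a) (hρ0 : ∀ s a, 0 ≤ ρ s a)
    (hcρ : ∀ s a, c s a ≤ ρ s a)
    (hρ1 : ∀ s, ∑ a, μ s a * ρ s a ≤ 1)
    {β : ℝ} (hβ : ∀ s, β ≤ ∑ a, μ s a * ρ s a)
    (r : S → A → Fin K → ℝ) (V₁ V₂ : S → Fin K → ℝ) (N : ℝ) (hN0 : 0 ≤ N)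
    (hN : ∀ s k, |V₁ s k - V₂ s k| ≤ N) (s : S) (k : Fin K) :
    |vtraceOp γ μ P c ρ r V₁ s k - vtraceOp γ μ P c ρ r V₂ s k| ≤ (1 - (1 - γ) * β) * N := by
  have hμc : ∀ s, ∑ a, μ s a * c s a ≤ 1 := fun s =>
    le_trans (Finset.sum_le_sum fun a _ =>
      mul_le_mul_of_nonneg_left (hcρ s a) (hμ0 s a)) (hρ1 s)
  have hsum : ∀ (f : S → ℝ) (s : S), Summable fun t : ℕ => γ ^ t * iterM μ P c f t s := by
    intro f s
    obtain ⟨C, hC0, hC⟩ := exists_bound₁ f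
    exact summable_iterM hγ0 hγ1 hμ0 hc0 hP0 hμc hP1 hC0 hC s
  have hsum' : ∀ (f : S → ℝ) (s : S),
      Summable fun t : ℕ => γ ^ (t + 1) * iterM μ P c f t s := by
    intro f s
    refine ((hsum f s).mul_left γ).congr fun t => ?_
    rw [pow_succ]; ring
  have hsumE : ∀ (h : S → A → S → ℝ) (s : S),
      Summable fun t : ℕ => γ ^ t * exw μ P c h t s := by
    intro h s
    refine (hsum (exw μ P c h 0) s).congr fun t => ?_
    rw [← exw_eq_iterM]
  set δ : S → ℝ := fun s => V₁ s k - V₂ s k with hδdef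
  set hδ : S → A → S → ℝ := fun s1 a s2 => ρ s1 a * (γ * δ s2 - δ s1) with hhδ
  -- Step A : split the difference
  have hsplit : vtraceOp γ μ P c ρ r V₁ s k - vtraceOp γ μ P c ρ r V₂ s k
      = δ s + ∑' t : ℕ, γ ^ t * exw μ P c hδ t s := by
    unfold vtraceOp
    have hterm : ∀ t,
        γ ^ t * exw μ P c (fun s1 a s2 => ρ s1 a * (r s1 a k + γ * V₁ s2 k - V₁ s1 k)) t s
        - γ ^ t * exw μ P c (fun s1 a s2 => ρ s1 a * (r s1 a k + γ * V₂ s2 k - V₂ s1 k)) t s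
        = γ ^ t * exw μ P c hδ t s := by
      intro t
      rw [← mul_sub, exw_sub]
      congr 2
      funext s1 a s2
      simp only [hhδ, hδdef]
      ring
    have := Summable.tsum_sub (hsumE (fun s1 a s2 => ρ s1 a * (r s1 a k + γ * V₁ s2 k - V₁ s1 k)) s)
      (hsumE (fun s1 a s2 => ρ s1 a * (r s1 a k + γ * V₂ s2 k - V₂ s1 k)) s)
    have h2 : ∑' t : ℕ,
        (γ ^ t * exw μ P c (fun s1 a s2 => ρ s1 a * (r s1 a k + γ * V₁ s2 k - V₁ s1 k)) t s
        - γ ^ t * exw μ P c (fun s1 a s2 => ρ s1 a * (r s1 a k + γ * V₂ s2 k - V₂ s1 k)) t s)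
        = ∑' t : ℕ, γ ^ t * exw μ P c hδ t s := tsum_congr hterm
    rw [h2] at this
    simp only [hδdef]
    linarith [this]
  -- basic facts about ρ̄
  have hρb0 : ∀ s, (0:ℝ) ≤ ∑ a, μ s a * ρ s a := fun s =>
    Finset.sum_nonneg fun a _ => mul_nonneg (hμ0 s a) (hρ0 s a)
  -- Step B : the seed of the series
  set Q : S → ℝ := fun s => ∑ a, μ s a * ρ s a * ∑ s', P s a s' * δ s' with hQdef
  set ρδ : S → ℝ := fun s => (∑ a, μ s a * ρ s a) * δ s with hρδdef
  have he0 : exw μ P c hδ 0 = fun s => γ * Q s - ρδ s := by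
    funext s
    show (∑ a, μ s a * ∑ s', P s a s' * (ρ s a * (γ * δ s' - δ s))) = _
    have h1 : ∀ a, (∑ s', P s a s' * (ρ s a * (γ * δ s' - δ s)))
        = γ * (μ s a)⁻¹ * 0 + (γ * (ρ s a * ∑ s', P s a s' * δ s') - ρ s a * δ s) := by
      intro a
      rw [mul_zero, zero_add]
      calc (∑ s', P s a s' * (ρ s a * (γ * δ s' - δ s)))
          = ∑ s', (γ * (ρ s a * (P s a s' * δ s')) - ρ s a * δ s * P s a s') :=
            Finset.sum_congr rfl fun s' _ => by ring
        _ = γ * (ρ s a * ∑ s', P s a s' * δ s') - ρ s a * δ s * ∑ s', P s a s' := by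
            rw [Finset.sum_sub_distrib, ← Finset.mul_sum, ← Finset.mul_sum, ← Finset.mul_sum]
        _ = γ * (ρ s a * ∑ s', P s a s' * δ s') - ρ s a * δ s := by rw [hP1, mul_one]
    calc (∑ a, μ s a * ∑ s', P s a s' * (ρ s a * (γ * δ s' - δ s)))
        = ∑ a, (γ * (μ s a * ρ s a * ∑ s', P s a s' * δ s') - μ s a * ρ s a * δ s) :=
          Finset.sum_congr rfl fun a _ => by rw [h1]; ring
      _ = γ * Q s - ρδ s := by
          rw [Finset.sum_sub_distrib, ← Finset.mul_sum, ← Finset.sum_mul, hQdef, hρδdef]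
  -- Step C : rearrangement
  set g : S → ℝ := fun s => Q s - iterM μ P c ρδ 1 s with hgdef
  have hrearr : vtraceOp γ μ P c ρ r V₁ s k - vtraceOp γ μ P c ρ r V₂ s k
      = (1 - ∑ a, μ s a * ρ s a) * δ s
        + ∑' t : ℕ, γ ^ (t + 1) * iterM μ P c g t s := by
    rw [hsplit]
    have : ∑' t : ℕ, γ ^ t * exw μ P c hδ t s
        = ∑' t : ℕ, γ ^ t * iterM μ P c (fun s => γ * Q s - ρδ s) t s := by
      refine tsum_congr fun t => ?_
      rw [exw_eq_iterM, he0]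
    rw [this, key_rearrange Q ρδ s hsum, hgdef, hρδdef]
    ring
  -- Step D : pointwise bound on g
  set w : S → ℝ := fun s => N * ((∑ a, μ s a * ρ s a) - iterM μ P c (fun s => ∑ a, μ s a * ρ s a) 1 s) with hwdef
  have hρb1' : ∀ s, (∑ a, μ s a * ρ s a) ≤ 1 := hρ1
  have hgw : ∀ s, |g s| ≤ w s := by
    intro s
    have hMρ : iterM μ P c ρδ 1 s = ∑ a, μ s a * c s a * ∑ s', P s a s' * ρδ s' := rfl
    have hg2 : g s = ∑ a, ∑ s', (μ s a * P s a s' * (ρ s a - c s a * ∑ b, μ s' b * ρ s' b) * δ s') := by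
      rw [hgdef]
      simp only [hQdef]
      rw [hMρ, ← Finset.sum_sub_distrib]
      refine Finset.sum_congr rfl fun a _ => ?_
      rw [Finset.mul_sum, Finset.mul_sum, ← Finset.sum_sub_distrib]
      refine Finset.sum_congr rfl fun s' _ => ?_
      rw [hρδdef]
      ring
    have hcoeff : ∀ a s', 0 ≤ μ s a * P s a s' * (ρ s a - c s a * ∑ b, μ s' b * ρ s' b) := by
      intro a s'
      refine mul_nonneg (mul_nonneg (hμ0 s a) (hP0 s a s')) ?_
      have h1 : c s a * (∑ b, μ s' b * ρ s' b) ≤ c s a * 1 :=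
        mul_le_mul_of_nonneg_left (hρb1' s') (hc0 s a)
      have := hcρ s a
      linarith
    have hw2 : w s = ∑ a, ∑ s', (μ s a * P s a s' * (ρ s a - c s a * ∑ b, μ s' b * ρ s' b) * N) := by
      simp only [hwdef]
      have hM : iterM μ P c (fun s => ∑ a, μ s a * ρ s a) 1 s
          = ∑ a, μ s a * c s a * ∑ s', P s a s' * ∑ b, μ s' b * ρ s' b := rfl
      rw [hM]
      rw [mul_sub, Finset.mul_sum, Finset.mul_sum, ← Finset.sum_sub_distrib]
      refine Finset.sum_congr rfl fun a _ => ?_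
      have h3 : N * (μ s a * ρ s a) = ∑ s', μ s a * P s a s' * ρ s a * N := by
        rw [← Finset.sum_mul]
        rw [show (∑ s', μ s a * P s a s' * ρ s a) = μ s a * ρ s a * ∑ s', P s a s' from by
          rw [Finset.mul_sum]; exact Finset.sum_congr rfl fun s' _ => by ring]
        rw [hP1]; ring
      rw [h3, Finset.mul_sum, Finset.mul_sum, ← Finset.sum_sub_distrib]
      refine Finset.sum_congr rfl fun s' _ => ?_
      ring
    rw [hg2, hw2]
    calc |∑ a, ∑ s', (μ s a * P s a s' * (ρ s a - c s a * ∑ b, μ s' b * ρ s' b) * δ s')|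
        ≤ ∑ a, |∑ s', (μ s a * P s a s' * (ρ s a - c s a * ∑ b, μ s' b * ρ s' b) * δ s')| :=
          Finset.abs_sum_le_sum_abs _ _
      _ ≤ ∑ a, ∑ s', |μ s a * P s a s' * (ρ s a - c s a * ∑ b, μ s' b * ρ s' b) * δ s'| :=
          Finset.sum_le_sum fun a _ => Finset.abs_sum_le_sum_abs _ _
      _ ≤ ∑ a, ∑ s', (μ s a * P s a s' * (ρ s a - c s a * ∑ b, μ s' b * ρ s' b) * N) := by
          refine Finset.sum_le_sum fun a _ => Finset.sum_le_sum fun s' _ => ?_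
          rw [abs_mul, abs_of_nonneg (hcoeff a s')]
          exact mul_le_mul_of_nonneg_left (hN s' k) (hcoeff a s')
  -- Step E : the telescoping bound
  set F : ℝ := ∑' t : ℕ, γ ^ t * iterM μ P c (fun s => ∑ a, μ s a * ρ s a) t s with hFdef
  have hwsum : ∑' t : ℕ, γ ^ (t + 1) * iterM μ P c w t s
      = N * (γ * F - (F - ∑ a, μ s a * ρ s a)) := by
    have h1 : ∀ t s₀, iterM μ P c w t s₀
        = N * iterM μ P c (fun s => (∑ a, μ s a * ρ s a)
            - iterM μ P c (fun s => ∑ a, μ s a * ρ s a) 1 s) t s₀ := by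
      intro t s₀
      rw [hwdef]
      exact iterM_smul N _ t s₀
    calc ∑' t : ℕ, γ ^ (t + 1) * iterM μ P c w t s
        = ∑' t : ℕ, N * (γ ^ (t + 1) * iterM μ P c (fun s => (∑ a, μ s a * ρ s a)
            - iterM μ P c (fun s => ∑ a, μ s a * ρ s a) 1 s) t s) :=
          tsum_congr fun t => by rw [h1]; ring
      _ = N * ∑' t : ℕ, γ ^ (t + 1) * iterM μ P c (fun s => (∑ a, μ s a * ρ s a)
            - iterM μ P c (fun s => ∑ a, μ s a * ρ s a) 1 s) t s := tsum_mul_left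
      _ = N * (γ * F - (F - ∑ a, μ s a * ρ s a)) := by
          rw [key_telescope (fun s => ∑ a, μ s a * ρ s a) s hsum, hFdef]
  have hFβ : β ≤ F := by
    have h0 : γ ^ 0 * iterM μ P c (fun s => ∑ a, μ s a * ρ s a) 0 s ≤ F :=
      Summable.le_tsum (hsum _ s) 0 fun t _ =>
        mul_nonneg (pow_nonneg hγ0 t) (iterM_nonneg hμ0 hc0 hP0 hρb0 t s)
    have : γ ^ 0 * iterM μ P c (fun s => ∑ a, μ s a * ρ s a) 0 s = ∑ a, μ s a * ρ s a := by
      rw [pow_zero, one_mul]; rfl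
    rw [this] at h0
    exact le_trans (hβ s) h0
  -- Final assembly
  rw [hrearr]
  have habs1 : |(1 - ∑ a, μ s a * ρ s a) * δ s| ≤ (1 - ∑ a, μ s a * ρ s a) * N := by
    rw [abs_mul, abs_of_nonneg (by linarith [hρb1' s])]
    exact mul_le_mul_of_nonneg_left (hN s k) (by linarith [hρb1' s])
  have habs2 : |∑' t : ℕ, γ ^ (t + 1) * iterM μ P c g t s|
      ≤ ∑' t : ℕ, γ ^ (t + 1) * iterM μ P c w t s := by
    have hb1 : ∀ t, ‖γ ^ (t + 1) * iterM μ P c g t s‖ ≤ γ ^ (t + 1) * iterM μ P c w t s := by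
      intro t
      rw [Real.norm_eq_abs, abs_mul, abs_pow, abs_of_nonneg hγ0]
      exact mul_le_mul_of_nonneg_left (iterM_abs_le hμ0 hc0 hP0 hgw t s) (pow_nonneg hγ0 _)
    have hsn : Summable fun t : ℕ => ‖γ ^ (t + 1) * iterM μ P c g t s‖ := by
      refine Summable.of_nonneg_of_le (fun t => norm_nonneg _) hb1 ?_
      exact hsum' w s
    calc |∑' t : ℕ, γ ^ (t + 1) * iterM μ P c g t s|
        ≤ ∑' t : ℕ, ‖γ ^ (t + 1) * iterM μ P c g t s‖ := norm_tsum_le_tsum_norm hsn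
      _ ≤ ∑' t : ℕ, γ ^ (t + 1) * iterM μ P c w t s := Summable.tsum_le_tsum hb1 hsn (hsum' w s)
  calc |(1 - ∑ a, μ s a * ρ s a) * δ s + ∑' t : ℕ, γ ^ (t + 1) * iterM μ P c g t s|
      ≤ |(1 - ∑ a, μ s a * ρ s a) * δ s| + |∑' t : ℕ, γ ^ (t + 1) * iterM μ P c g t s| :=
        abs_add_le _ _
    _ ≤ (1 - ∑ a, μ s a * ρ s a) * N + N * (γ * F - (F - ∑ a, μ s a * ρ s a)) := by
        rw [← hwsum]; exact add_le_add habs1 habs2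
    _ = N * (1 - (1 - γ) * F) := by ring
    _ ≤ (1 - (1 - γ) * β) * N := by
        nlinarith [mul_nonneg (mul_nonneg hN0 (by linarith : (0:ℝ) ≤ 1 - γ)) (sub_nonneg.mpr hFβ)]




/-- with the clipped importance weights
`c(s,a) = min c̄ (π(a|s)/μ(a|s))` and `ρ(s,a) = min ρ̄ (π(a|s)/μ(a|s))`, `0 ≤ c̄ ≤ ρ̄`,
and `∑ a, μ(a|s) ρ(s,a) ≥ β` for all `s` with `β ∈ (0,1]`, the V-trace operator `R` is a
contraction (sup norm) with constant at most `1 - (1 - γ) β < 1`, and its unique fixed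
point is `V^{π̃}` where
`π̃(a|s) = min (ρ̄ μ(a|s)) (π(a|s)) / ∑ b, min (ρ̄ μ(b|s)) (π(b|s))`. -/
theorem vtrace_clipped_contraction_and_fixed_point
    {S A : Type*} [Fintype S] [Fintype A] [Nonempty S] [Nonempty A]
    {K : ℕ} [NeZero K]
    (γ : ℝ) (hγ0 : 0 ≤ γ) (hγ1 : γ < 1)
    (P : S → A → S → ℝ) (hP0 : ∀ s a s', 0 ≤ P s a s')
    (hP1 : ∀ s a, ∑ s', P s a s' = 1)
    (π μ : S → A → ℝ)
    (hπ0 : ∀ s a, 0 ≤ π s a) (hπ1 : ∀ s, ∑ a, π s a = 1)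
    (hμpos : ∀ s a, 0 < μ s a) (hμ1 : ∀ s, ∑ a, μ s a = 1)
    (r : S → A → Fin K → ℝ)
    (cbar ρbar : ℝ) (hcbar : 0 ≤ cbar) (hcρ : cbar ≤ ρbar)
    (β : ℝ) (hβ0 : 0 < β) (hβ1 : β ≤ 1)
    (hC2 : ∀ s, β ≤ ∑ a, μ s a * min ρbar (π s a / μ s a)) :
    (∀ V₁ V₂ : S → Fin K → ℝ,
      supNorm (fun s k =>
          vtraceOp γ μ P (fun s a => min cbar (π s a / μ s a))
            (fun s a => min ρbar (π s a / μ s a)) r V₁ s k -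
          vtraceOp γ μ P (fun s a => min cbar (π s a / μ s a))
            (fun s a => min ρbar (π s a / μ s a)) r V₂ s k)
        ≤ (1 - (1 - γ) * β) * supNorm (fun s k => V₁ s k - V₂ s k)) ∧
    1 - (1 - γ) * β < 1 ∧
    vtraceOp γ μ P (fun s a => min cbar (π s a / μ s a))
        (fun s a => min ρbar (π s a / μ s a)) r
        (valueFn γ
          (fun s a => min (ρbar * μ s a) (π s a) / ∑ b, min (ρbar * μ s b) (π s b)) P r)
      = valueFn γ
          (fun s a => min (ρbar * μ s a) (π s a) / ∑ b, min (ρbar * μ s b) (π s b)) P r ∧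
    ∀ V : S → Fin K → ℝ,
      vtraceOp γ μ P (fun s a => min cbar (π s a / μ s a))
          (fun s a => min ρbar (π s a / μ s a)) r V = V →
      V = valueFn γ
            (fun s a => min (ρbar * μ s a) (π s a) / ∑ b, min (ρbar * μ s b) (π s b))
            P r := by
  have hρbar0 : (0:ℝ) ≤ ρbar := hcbar.trans hcρ
  set c : S → A → ℝ := fun s a => min cbar (π s a / μ s a) with hcdef
  set ρ : S → A → ℝ := fun s a => min ρbar (π s a / μ s a) with hρdef
  set tπ : S → A → ℝ :=
    fun s a => min (ρbar * μ s a) (π s a) / ∑ b, min (ρbar * μ s b) (π s b) with htπdef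
  have hμ0 : ∀ s a, 0 ≤ μ s a := fun s a => (hμpos s a).le
  have hc0 : ∀ s a, 0 ≤ c s a := fun s a =>
    le_min hcbar (div_nonneg (hπ0 s a) (hμ0 s a))
  have hρ0 : ∀ s a, 0 ≤ ρ s a := fun s a =>
    le_min hρbar0 (div_nonneg (hπ0 s a) (hμ0 s a))
  have hcρ' : ∀ s a, c s a ≤ ρ s a := fun s a => min_le_min hcρ le_rfl
  have hμdiv : ∀ s a, μ s a * (π s a / μ s a) = π s a := by
    intro s a
    field_simp
    rw [mul_comm, mul_div_assoc, div_self (hμpos s a).ne', mul_one]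
  have hρ1 : ∀ s, ∑ a, μ s a * ρ s a ≤ 1 := by
    intro s
    calc ∑ a, μ s a * ρ s a ≤ ∑ a, π s a := by
          refine Finset.sum_le_sum fun a _ => ?_
          have h1 : μ s a * ρ s a ≤ μ s a * (π s a / μ s a) :=
            mul_le_mul_of_nonneg_left (min_le_right _ _) (hμ0 s a)
          rwa [hμdiv s a] at h1
      _ = 1 := hπ1 s
  have hβρ : ∀ s, β ≤ ∑ a, μ s a * ρ s a := hC2
  -- sup norm facts
  have kne : (0:ℕ) < K := Nat.pos_of_ne_zero (NeZero.ne K)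
  have hsupN : ∀ (W : S → Fin K → ℝ) (s : S) (k : Fin K), |W s k| ≤ supNorm W := by
    intro W s k
    exact le_trans (Finset.le_sup' (fun k : Fin K => |W s k|) (Finset.mem_univ k))
      (Finset.le_sup' (fun s => Finset.univ.sup' Finset.univ_nonempty fun k : Fin K => |W s k|)
        (Finset.mem_univ s))
  have hsup0 : ∀ W : S → Fin K → ℝ, 0 ≤ supNorm W := fun W =>
    le_trans (abs_nonneg _) (hsupN W (Classical.arbitrary S) ⟨0, kne⟩)
  have hsupLe : ∀ (W : S → Fin K → ℝ) (b : ℝ), (∀ s k, |W s k| ≤ b) → supNorm W ≤ b := by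
    intro W b hb
    exact Finset.sup'_le _ _ fun s _ => Finset.sup'_le _ _ fun k _ => hb s k
  -- Part 1 : contraction
  have hcontr : ∀ V₁ V₂ : S → Fin K → ℝ,
      supNorm (fun s k => vtraceOp γ μ P c ρ r V₁ s k - vtraceOp γ μ P c ρ r V₂ s k)
        ≤ (1 - (1 - γ) * β) * supNorm (fun s k => V₁ s k - V₂ s k) := by
    intro V₁ V₂
    refine hsupLe _ _ fun s k => ?_
    exact vtrace_diff_bound hγ0 hγ1 hμ0 hP0 hP1 hc0 hρ0 hcρ' hρ1 hβρ r V₁ V₂ _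
      (hsup0 _) (fun s k => hsupN (fun s k => V₁ s k - V₂ s k) s k) s k
  -- Part 2
  have hκ : 1 - (1 - γ) * β < 1 := by nlinarith [mul_pos (by linarith : (0:ℝ) < 1 - γ) hβ0]
  -- π̃ facts
  have hmin : ∀ s a, μ s a * ρ s a = min (ρbar * μ s a) (π s a) := by
    intro s a
    rw [hρdef]
    rw [mul_min_of_nonneg _ _ (hμ0 s a), hμdiv s a, mul_comm (μ s a) ρbar]
  have hZβ : ∀ s, β ≤ ∑ b, min (ρbar * μ s b) (π s b) := by
    intro s
    calc β ≤ ∑ a, μ s a * ρ s a := hβρ s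
      _ = ∑ b, min (ρbar * μ s b) (π s b) := Finset.sum_congr rfl fun a _ => hmin s a
  have hZpos : ∀ s, 0 < ∑ b, min (ρbar * μ s b) (π s b) := fun s => lt_of_lt_of_le hβ0 (hZβ s)
  have htπ0 : ∀ s a, 0 ≤ tπ s a := fun s a =>
    div_nonneg (le_min (mul_nonneg hρbar0 (hμ0 s a)) (hπ0 s a)) (hZpos s).le
  have htπ1 : ∀ s, ∑ a, tπ s a = 1 := by
    intro s
    rw [htπdef]
    rw [← Finset.sum_div, div_self (hZpos s).ne']
  have hμρtπ : ∀ s a, μ s a * ρ s a = (∑ b, min (ρbar * μ s b) (π s b)) * tπ s a := by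
    intro s a
    rw [hmin s a, htπdef]
    field_simp
    rw [mul_div_assoc, div_self (hZpos s).ne', mul_one]
  -- Part 3 : fixed point
  have hBell := fun (s : S) (k : Fin K) => bellman hγ0 hγ1 htπ0 htπ1 hP0 hP1 r s k
  have hfp : vtraceOp γ μ P c ρ r (valueFn γ tπ P r) = valueFn γ tπ P r := by
    set W : S → Fin K → ℝ := valueFn γ tπ P r with hWdef
    have h0 : ∀ (k : Fin K) (s : S),
        exw μ P c (fun s1 a s2 => ρ s1 a * (r s1 a k + γ * W s2 k - W s1 k)) 0 s = 0 := by
      intro k s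
      show (∑ a, μ s a * ∑ s', P s a s' * (ρ s a * (r s a k + γ * W s' k - W s k))) = 0
      calc (∑ a, μ s a * ∑ s', P s a s' * (ρ s a * (r s a k + γ * W s' k - W s k)))
          = ∑ a, ((∑ b, min (ρbar * μ s b) (π s b)) *
                (tπ s a * (r s a k + γ * ∑ s', P s a s' * W s' k))
              - (∑ b, min (ρbar * μ s b) (π s b)) * (tπ s a * W s k)) := by
            refine Finset.sum_congr rfl fun a _ => ?_
            have hin : (∑ s', P s a s' * (ρ s a * (r s a k + γ * W s' k - W s k)))
                = ρ s a * (r s a k - W s k) + γ * ρ s a * ∑ s', P s a s' * W s' k := by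
              calc (∑ s', P s a s' * (ρ s a * (r s a k + γ * W s' k - W s k)))
                  = ∑ s', (ρ s a * (r s a k - W s k) * P s a s'
                      + γ * ρ s a * (P s a s' * W s' k)) :=
                    Finset.sum_congr rfl fun s' _ => by ring
                _ = ρ s a * (r s a k - W s k) * (∑ s', P s a s')
                    + γ * ρ s a * ∑ s', P s a s' * W s' k := by
                    rw [Finset.sum_add_distrib, ← Finset.mul_sum, ← Finset.mul_sum]
                _ = ρ s a * (r s a k - W s k) + γ * ρ s a * ∑ s', P s a s' * W s' k := by
                    rw [hP1, mul_one]
            rw [hin]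
            have hkey := hμρtπ s a
            linear_combination (r s a k + γ * (∑ s', P s a s' * W s' k) - W s k) * hkey
        _ = (∑ b, min (ρbar * μ s b) (π s b)) *
              (∑ a, tπ s a * (r s a k + γ * ∑ s', P s a s' * W s' k))
            - (∑ b, min (ρbar * μ s b) (π s b)) * ((∑ a, tπ s a) * W s k) := by
            rw [Finset.sum_sub_distrib, ← Finset.mul_sum, ← Finset.mul_sum, ← Finset.sum_mul]
        _ = 0 := by
            rw [← hBell s k, htπ1 s, one_mul]
            ring
    funext s k
    show W s k + _ = W s k
    have hz : ∀ t : ℕ,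
        γ ^ t * exw μ P c (fun s1 a s2 => ρ s1 a * (r s1 a k + γ * W s2 k - W s1 k)) t s = 0 := by
      intro t
      rw [exw_zero_of _ (h0 k) t s, mul_zero]
    rw [tsum_congr hz, tsum_zero, add_zero]
  -- Part 4 : uniqueness
  refine ⟨hcontr, hκ, hfp, ?_⟩
  intro V hV
  have h := hcontr V (valueFn γ tπ P r)
  rw [hV, hfp] at h
  set D : S → Fin K → ℝ := fun s k => V s k - valueFn γ tπ P r s k with hDdef
  have hD0 : supNorm D ≤ 0 := by
    nlinarith [hsup0 D, mul_pos (by linarith : (0:ℝ) < 1 - γ) hβ0]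
  funext s k
  have h1 : |D s k| ≤ 0 := le_trans (hsupN D s k) hD0
  have h2 : D s k = 0 := abs_nonpos_iff.mp h1
  have h3 : V s k - valueFn γ tπ P r s k = 0 := h2
  linarith [h3]
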